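/- Let L be an n×n real symmetric matrix with all eigenvalues in [0, λ_max] for some λ_max > 0, let L̃ = (2/λ_max) • L − 1, and let p be a real polynomial with |p(ξ)| ≤ 1 for all ξ ∈ [−1, 1]. Let φ : ℝⁿ → ℝⁿ be 1-Lipschitz (with respect to the Euclidean norm), and let α_hp, ε ∈ ℝ. Define F : ℝⁿ → ℝⁿ by F(x) = (1 + Real.tanh ε) • x − φ((Polynomial.aeval L̃ p) *ᵥ x + α_hp • (x − (1/λ_max) • (L *ᵥ x))). Then F is Lipschitz with constant (1 + Real.tanh ε) + 1 + |α_hp|, i.e. ‖F(x) − F(y)‖ ≤ ((1 + Real.tanh ε) + 1 + |α_hp|) · ‖x − y‖ for all x, y ∈ ℝⁿ, where ‖·‖ is the Euclidean norm. -/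

import Mathlib

/-!
The linear part `p(L̃) + α_hp (1 - λ_max⁻¹ L)` of the layer is a single real polynomial in `L`,
whose absolute value on `[0, λ_max]`, hence on the spectrum of `L`, is at most `1 + |α_hp|`.
Since `L` is unitarily diagonalizable, this bounds the L2 operator norm of the linear part.
Composing with the 1-Lipschitz `φ` and adding the gated residual, whose coefficient
`1 + tanh ε` is positive, gives the Lipschitz constant.
-/

open Matrix Polynomial
open scoped Matrix.Norms.L2Operator

namespace Matrix.IsHermitian

variable {𝕜 : Type*} [RCLike 𝕜] {n : Type*} [Fintype n] [DecidableEq n] {A : Matrix n n 𝕜}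

lemma l2_opNorm_cfc_le (hA : A.IsHermitian) (f : ℝ → ℝ) {c : ℝ} (hc : 0 ≤ c)
    (hf : ∀ i, |f (hA.eigenvalues i)| ≤ c) : ‖cfc f A‖ ≤ c := by
  rw [hA.cfc_eq, IsHermitian.cfc, Unitary.conjStarAlgAut_apply, ← Unitary.coe_star,
    CStarRing.norm_mul_coe_unitary, CStarRing.norm_coe_unitary_mul, l2_opNorm_diagonal,
    pi_norm_le_iff_of_nonneg hc]
  intro i
  simpa using hf i

lemma l2_opNorm_aeval_le (hA : A.IsHermitian) (q : ℝ[X]) {c : ℝ} (hc : 0 ≤ c)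
    (hq : ∀ i, |q.eval (hA.eigenvalues i)| ≤ c) : ‖aeval A q‖ ≤ c :=
  cfc_polynomial q A ▸ hA.l2_opNorm_cfc_le _ hc hq

end Matrix.IsHermitian

noncomputable def polynsdResponse (p : ℝ[X]) (lmax αhp : ℝ) : ℝ[X] :=
  p.comp (C (2 / lmax) * X - 1) + C αhp * (1 - C (1 / lmax) * X)

section PolynsdResponse

variable (p : ℝ[X]) {lmax : ℝ} (αhp : ℝ)

lemma aeval_polynsdResponse {A : Type*} [Ring A] [Algebra ℝ A] (a : A) :
    aeval a (polynsdResponse p lmax αhp)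
      = aeval ((2 / lmax) • a - 1) p + αhp • (1 - (1 / lmax) • a) := by
  simp [polynsdResponse, aeval_comp, Algebra.smul_def]

lemma abs_eval_polynsdResponse_le (hlmax : 0 < lmax)
    (hp : ∀ ξ ∈ Set.Icc (-1 : ℝ) 1, |p.eval ξ| ≤ 1) {t : ℝ} (ht : t ∈ Set.Icc 0 lmax) :
    |(polynsdResponse p lmax αhp).eval t| ≤ 1 + |αhp| := by
  obtain ⟨s, hs0, hs1, rfl⟩ : ∃ s, 0 ≤ s ∧ s ≤ 1 ∧ t = lmax * s :=
    ⟨t / lmax, by have := ht.1; positivity, (div_le_one hlmax).2 ht.2, by field_simp⟩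
  have heval : (polynsdResponse p lmax αhp).eval (lmax * s)
      = p.eval (2 * s - 1) + αhp * (1 - s) := by
    simp only [polynsdResponse, eval_add, eval_comp, eval_sub, eval_mul, eval_C, eval_X, eval_one]
    field_simp
  rw [heval]
  calc |p.eval (2 * s - 1) + αhp * (1 - s)| ≤ |p.eval (2 * s - 1)| + |αhp| * |1 - s| := by
        rw [← abs_mul]; exact abs_add_le _ _
    _ ≤ 1 + |αhp| * 1 := by
        gcongr
        · exact hp _ ⟨by linarith, by linarith⟩
        · rw [abs_le]; constructor <;> linarith
    _ = 1 + |αhp| := by ring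

end PolynsdResponse

/-- **Global Lipschitz bound for the full PolyNSD layer.**
Let `L` be real symmetric with eigenvalues in `[0, λ_max]`, `L̃ = (2/λ_max) • L - 1`,
`p` a real polynomial with `|p(ξ)| ≤ 1` on `[-1, 1]`, `φ` a 1-Lipschitz nonlinearity, and
`F(x) = (1 + tanh ε) • x - φ(p(L̃) x + α_hp • (x - λ_max⁻¹ L x))`. Then `F` is Lipschitz
with constant `(1 + tanh ε) + 1 + |α_hp|` in the Euclidean norm.
(Here `(WithLp.equiv 2 (Fin n → ℝ)).symm` is the identity reinterpreting a plain vector,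
such as a matrix–vector product `M *ᵥ x`, as an element of Euclidean space.) -/
theorem polynsd_layer_lipschitz
    {n : ℕ} (L : Matrix (Fin n) (Fin n) ℝ) (hL : L.IsHermitian)
    (lmax : ℝ) (hlmax : 0 < lmax)
    (hspec : ∀ i, hL.eigenvalues i ∈ Set.Icc (0 : ℝ) lmax)
    (p : Polynomial ℝ) (hp : ∀ ξ ∈ Set.Icc (-1 : ℝ) 1, |p.eval ξ| ≤ 1)
    (φ : EuclideanSpace ℝ (Fin n) → EuclideanSpace ℝ (Fin n))
    (hφ : ∀ x y : EuclideanSpace ℝ (Fin n), ‖φ x - φ y‖ ≤ ‖x - y‖)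
    (αhp ε : ℝ)
    (F : EuclideanSpace ℝ (Fin n) → EuclideanSpace ℝ (Fin n))
    (hF : ∀ x : EuclideanSpace ℝ (Fin n),
      F x = (1 + Real.tanh ε) • x -
        φ ((WithLp.equiv 2 (Fin n → ℝ)).symm
              ((Polynomial.aeval ((2 / lmax) • L - 1) p).mulVec x)
            + αhp • (x - (1 / lmax) •
                (WithLp.equiv 2 (Fin n → ℝ)).symm (L.mulVec x)))) :
    ∀ x y : EuclideanSpace ℝ (Fin n),
      ‖F x - F y‖ ≤ ((1 + Real.tanh ε) + 1 + |αhp|) * ‖x - y‖ := by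
  set T := toEuclideanCLM (n := Fin n) (𝕜 := ℝ) (aeval L (polynsdResponse p lmax αhp))
  have hT : ‖T‖ ≤ 1 + |αhp| :=
    hL.l2_opNorm_aeval_le _ (by positivity) fun i ↦
      abs_eval_polynsdResponse_le p αhp hlmax hp (hspec i)
  have hFT : F = fun x ↦ (1 + Real.tanh ε) • x - φ (T x) := by
    funext x
    simp only [hF, T, aeval_polynsdResponse, map_add, map_smul, map_sub, map_one]
    rfl
  have hφlip : LipschitzWith 1 φ := .of_dist_le_mul fun x y ↦ by simpa [dist_eq_norm] using hφ x y
  have hFlip : LipschitzWith (‖1 + Real.tanh ε‖₊ + ‖T‖₊) F := by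
    simpa [hFT] using (lipschitzWith_smul (1 + Real.tanh ε)).sub (hφlip.comp T.lipschitz)
  have hγ : 0 ≤ 1 + Real.tanh ε := by linarith [Real.neg_one_lt_tanh ε]
  intro x y
  calc ‖F x - F y‖ ≤ (‖1 + Real.tanh ε‖ + ‖T‖) * ‖x - y‖ := hFlip.norm_sub_le x y
    _ ≤ ((1 + Real.tanh ε) + 1 + |αhp|) * ‖x - y‖ := by
      rw [Real.norm_of_nonneg hγ]
      exact mul_le_mul_of_nonneg_right (by linarith) (norm_nonneg _)
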